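/- In the generalized Dinkelbach algorithm, the sequence of parameters λ_{m+1} = min_k N_k(Q_m)/D_k(Q_m), where Q_m maximizes min_k [N_k(Q) − λ_m D_k(Q)] over S, is nondecreasing and bounded above by the optimal value λ*, hence converges; moreover λ_m < λ* implies λ_{m+1} > λ_m. -/
import Mathlib


/-- In the generalized Dinkelbach algorithm, the parameter sequence
`λ_{m+1} = min_k N_k(Q_m)/D_k(Q_m)`, where `Q_m` maximizes
`min_k [N_k(Q) − λ_m D_k(Q)]` over `S`, is nondecreasing and bounded above by the
optimal value `λ*`, hence converges; moreover `λ_m < λ*` implies `λ_{m+1} > λ_m`. -/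
theorem stmt_12 {E : Type*} [NormedAddCommGroup E] [NormedSpace ℝ E]
    (S : Set E) (hS : S.Nonempty) (hSc : IsCompact S)
    (K : ℕ) (hK : 0 < K) (hne : (Finset.univ : Finset (Fin K)).Nonempty)
    (N D : Fin K → E → ℝ)
    (hN : ∀ k, Continuous (N k)) (hD : ∀ k, Continuous (D k))
    (hDpos : ∀ k, ∀ Q ∈ S, 0 < D k Q)
    (lamStar : ℝ)
    (hlamStar : IsGreatest
      ((fun Q => Finset.univ.inf' hne (fun k => N k Q / D k Q)) '' S) lamStar)
    (lam : ℕ → ℝ) (Q : ℕ → E)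
    (hQmem : ∀ m, Q m ∈ S)
    (hQmax : ∀ m, IsGreatest
      ((fun Q' => Finset.univ.inf' hne (fun k => N k Q' - lam m * D k Q')) '' S)
      (Finset.univ.inf' hne (fun k => N k (Q m) - lam m * D k (Q m))))
    (hrec : ∀ m, lam (m + 1) = Finset.univ.inf' hne (fun k => N k (Q m) / D k (Q m)))
    (h0 : lam 0 ≤ lamStar) :
    Monotone lam ∧ (∀ m, lam m ≤ lamStar) ∧
    (∃ L : ℝ, Filter.Tendsto lam Filter.atTop (nhds L)) ∧
    (∀ m, lam m < lamStar → lam m < lam (m + 1)) := by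
  -- a maximizer of the ratio
  obtain ⟨Qs, hQsS, hQsval⟩ := hlamStar.1
  have hratioQs : ∀ k, lamStar ≤ N k Qs / D k Qs := by
    intro k
    rw [← hQsval]
    exact Finset.inf'_le _ (Finset.mem_univ k)
  -- boundedness
  have hbdd : ∀ m, lam m ≤ lamStar := by
    intro m
    cases m with
    | zero => exact h0
    | succ n =>
      rw [hrec n]
      exact hlamStar.2 ⟨Q n, hQmem n, rfl⟩
  -- if lam m ≤ lamStar then inf' at Q m is ≥ 0, hence each ratio ≥ lam m
  have hstep : ∀ m, lam m ≤ lam (m + 1) := by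
    intro m
    have hle : lam m ≤ lamStar := hbdd m
    have hQs0 : (0:ℝ) ≤ Finset.univ.inf' hne (fun k => N k Qs - lam m * D k Qs) := by
      apply Finset.le_inf'
      intro k _
      have hDk := hDpos k Qs hQsS
      have : lam m ≤ N k Qs / D k Qs := hle.trans (hratioQs k)
      have := (le_div_iff₀ hDk).mp this
      linarith
    have h0' : (0:ℝ) ≤ Finset.univ.inf' hne (fun k => N k (Q m) - lam m * D k (Q m)) :=
      hQs0.trans ((hQmax m).2 ⟨Qs, hQsS, rfl⟩)
    rw [hrec m]
    apply Finset.le_inf'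
    intro k _
    have hDk := hDpos k (Q m) (hQmem m)
    have hterm : 0 ≤ N k (Q m) - lam m * D k (Q m) :=
      h0'.trans (Finset.inf'_le _ (Finset.mem_univ k))
    rw [le_div_iff₀ hDk]
    linarith
  have hmono : Monotone lam := monotone_nat_of_le_succ hstep
  refine ⟨hmono, hbdd, ?_, ?_⟩
  · exact ⟨_, tendsto_atTop_ciSup hmono ⟨lamStar, fun x ⟨m, hm⟩ => hm ▸ hbdd m⟩⟩
  · intro m hlt
    have hQs0 : (0:ℝ) < Finset.univ.inf' hne (fun k => N k Qs - lam m * D k Qs) := by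
      rw [Finset.lt_inf'_iff]
      intro k _
      have hDk := hDpos k Qs hQsS
      have h1 : lamStar ≤ N k Qs / D k Qs := hratioQs k
      have h2 : lamStar * D k Qs ≤ N k Qs := (le_div_iff₀ hDk).mp h1
      nlinarith
    have h0' : (0:ℝ) < Finset.univ.inf' hne (fun k => N k (Q m) - lam m * D k (Q m)) :=
      hQs0.trans_le ((hQmax m).2 ⟨Qs, hQsS, rfl⟩)
    rw [hrec m, Finset.lt_inf'_iff]
    intro k _
    have hDk := hDpos k (Q m) (hQmem m)
    have hterm : 0 < N k (Q m) - lam m * D k (Q m) := by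
      calc (0:ℝ) < _ := h0'
        _ ≤ _ := Finset.inf'_le _ (Finset.mem_univ k)
    rw [lt_div_iff₀ hDk]
    linarith
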